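/- Let n ≥ 2 be an integer, let I ⊆ ℝ be an open interval, and let φ : ℝ × I → ℝ be infinitely differentiable. Suppose there exist α > 0 and R > 0 such that φ(x, t) ≥ α for all (x, t), and φ(x, t) = 1 whenever |x| ≥ R. Suppose φ satisfies the magma equation with m = −n, namely ∂_t φ + ∂_x(φⁿ) − ∂_x( φⁿ ∂_x( φⁿ ∂_t φ ) ) = 0 on ℝ × I. Then the generalized momentum t ↦ ∫_ℝ [ (1/2) φ(x,t)^{2n} (∂_x φ(x,t))² + (1/2)(φ(x,t) − 1)² ] dx is constant on I. -/

import Mathlib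

open MeasureTheory Set
open scoped ContDiff

namespace Stmt13Aux

variable {I : Set ℝ}

lemma memU {x t : ℝ} (ht : t ∈ I) : ((x, t) : ℝ × ℝ) ∈ (univ ×ˢ I) := ⟨mem_univ _, ht⟩

lemma sliceX (hI : IsOpen I) {W : ℝ × ℝ → ℝ} (hW : ContDiffOn ℝ ∞ W (univ ×ˢ I))
    (x : ℝ) {t : ℝ} (ht : t ∈ I) :
    HasDerivAt (fun y => W (y, t)) (fderiv ℝ W (x, t) (1, 0)) x := by
  have hU : IsOpen ((univ : Set ℝ) ×ˢ I) := isOpen_univ.prod hI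
  have hd : DifferentiableAt ℝ W (x, t) :=
    (hW.contDiffAt (hU.mem_nhds (memU ht))).differentiableAt (by norm_num)
  have hc : HasDerivAt (fun y : ℝ => ((y, t) : ℝ × ℝ)) ((1:ℝ), (0:ℝ)) x :=
    (hasDerivAt_id x).prodMk (hasDerivAt_const x t)
  exact hd.hasFDerivAt.comp_hasDerivAt x hc

lemma sliceT (hI : IsOpen I) {W : ℝ × ℝ → ℝ} (hW : ContDiffOn ℝ ∞ W (univ ×ˢ I))
    (x : ℝ) {t : ℝ} (ht : t ∈ I) :
    HasDerivAt (fun s => W (x, s)) (fderiv ℝ W (x, t) (0, 1)) t := by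
  have hU : IsOpen ((univ : Set ℝ) ×ˢ I) := isOpen_univ.prod hI
  have hd : DifferentiableAt ℝ W (x, t) :=
    (hW.contDiffAt (hU.mem_nhds (memU ht))).differentiableAt (by norm_num)
  have hc : HasDerivAt (fun s : ℝ => ((x, s) : ℝ × ℝ)) ((0:ℝ), (1:ℝ)) t :=
    (hasDerivAt_const t x).prodMk (hasDerivAt_id t)
  exact hd.hasFDerivAt.comp_hasDerivAt t hc

lemma sliceCont (hI : IsOpen I) {W : ℝ × ℝ → ℝ} (hW : ContinuousOn W (univ ×ˢ I))
    {t : ℝ} (ht : t ∈ I) : Continuous (fun x => W (x, t)) := by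
  rw [← continuousOn_univ]
  exact hW.comp (Continuous.continuousOn (by fun_prop)) (fun x _ => memU ht)

lemma contDiffOn_fderiv_apply (hI : IsOpen I) {W : ℝ × ℝ → ℝ}
    (hW : ContDiffOn ℝ ∞ W (univ ×ˢ I)) (v : ℝ × ℝ) :
    ContDiffOn ℝ ∞ (fun p => fderiv ℝ W p v) (univ ×ˢ I) :=
  (hW.fderiv_of_isOpen (isOpen_univ.prod hI) (by norm_num)).clm_apply contDiffOn_const

lemma clairaut (hI : IsOpen I) {W : ℝ × ℝ → ℝ} (hW : ContDiffOn ℝ ∞ W (univ ×ˢ I))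
    {q : ℝ × ℝ} (hq : q ∈ univ ×ˢ I) (v w : ℝ × ℝ) :
    fderiv ℝ (fun p => fderiv ℝ W p v) q w = fderiv ℝ (fun p => fderiv ℝ W p w) q v := by
  have hU : IsOpen ((univ : Set ℝ) ×ˢ I) := isOpen_univ.prod hI
  have hW1 : ContDiffOn ℝ ∞ (fderiv ℝ W) (univ ×ˢ I) :=
    hW.fderiv_of_isOpen hU (by norm_num)
  have hdiff : DifferentiableAt ℝ (fderiv ℝ W) q :=
    (hW1.contDiffAt (hU.mem_nhds hq)).differentiableAt (by norm_num)
  have hev : ∀ᶠ y in nhds q, HasFDerivAt W (fderiv ℝ W y) y := by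
    filter_upwards [hU.eventually_mem hq] with y hy
    exact ((hW.contDiffAt (hU.mem_nhds hy)).differentiableAt (by norm_num)).hasFDerivAt
  have hsym := second_derivative_symmetric_of_eventually hev hdiff.hasFDerivAt v w
  have h1 : fderiv ℝ (fun p => fderiv ℝ W p v) q
      = (ContinuousLinearMap.apply ℝ ℝ v).comp (fderiv ℝ (fderiv ℝ W) q) :=
    ((ContinuousLinearMap.apply ℝ ℝ v).hasFDerivAt.comp q hdiff.hasFDerivAt).fderiv
  have h2 : fderiv ℝ (fun p => fderiv ℝ W p w) q
      = (ContinuousLinearMap.apply ℝ ℝ w).comp (fderiv ℝ (fderiv ℝ W) q) :=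
    ((ContinuousLinearMap.apply ℝ ℝ w).hasFDerivAt.comp q hdiff.hasFDerivAt).fderiv
  rw [h1, h2]
  simpa using hsym.symm

/-! ### Specific functions -/

noncomputable def Phi (φ : ℝ → ℝ → ℝ) : ℝ × ℝ → ℝ := fun p => φ p.1 p.2

noncomputable def px (φ : ℝ → ℝ → ℝ) : ℝ × ℝ → ℝ := fun p => fderiv ℝ (Phi φ) p (1, 0)

noncomputable def pt (φ : ℝ → ℝ → ℝ) : ℝ × ℝ → ℝ := fun p => fderiv ℝ (Phi φ) p (0, 1)

noncomputable def pxt (φ : ℝ → ℝ → ℝ) : ℝ × ℝ → ℝ := fun p => fderiv ℝ (pt φ) p (1, 0)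

noncomputable def uX (n : ℕ) (φ : ℝ → ℝ → ℝ) : ℝ × ℝ → ℝ :=
  fun p => (n : ℝ) * Phi φ p ^ (n - 1) * px φ p * pt φ p + Phi φ p ^ n * pxt φ p

noncomputable def uXx (n : ℕ) (φ : ℝ → ℝ → ℝ) : ℝ × ℝ → ℝ := fun p => fderiv ℝ (uX n φ) p (1, 0)

noncomputable def QXd (n : ℕ) (φ : ℝ → ℝ → ℝ) : ℝ × ℝ → ℝ :=
  fun p => ((n : ℝ) * Phi φ p ^ (n - 1) * px φ p) * uX n φ p + Phi φ p ^ n * uXx n φ p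
    - (n : ℝ) * Phi φ p ^ (n - 1) * px φ p

noncomputable def Qf (n : ℕ) (φ : ℝ → ℝ → ℝ) : ℝ × ℝ → ℝ :=
  fun p => Phi φ p ^ n * uX n φ p - Phi φ p ^ n

noncomputable def Gf (n : ℕ) (φ : ℝ → ℝ → ℝ) : ℝ × ℝ → ℝ :=
  fun p => (Phi φ p - 1) * Qf n φ p + ((n : ℝ) + 1)⁻¹ * Phi φ p ^ (n + 1)

noncomputable def Df (n : ℕ) (φ : ℝ → ℝ → ℝ) : ℝ × ℝ → ℝ :=
  fun p => Phi φ p ^ n * px φ p * uX n φ p + (Phi φ p - 1) * pt φ p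

variable {φ : ℝ → ℝ → ℝ} {n : ℕ}

section smooth
variable (hI : IsOpen I) (hΦ : ContDiffOn ℝ ∞ (Phi φ) (univ ×ˢ I))
include hI hΦ

lemma smooth_px : ContDiffOn ℝ ∞ (px φ) (univ ×ˢ I) := contDiffOn_fderiv_apply hI hΦ _

lemma smooth_pt : ContDiffOn ℝ ∞ (pt φ) (univ ×ˢ I) := contDiffOn_fderiv_apply hI hΦ _

lemma smooth_pxt : ContDiffOn ℝ ∞ (pxt φ) (univ ×ˢ I) :=
  contDiffOn_fderiv_apply hI (smooth_pt hI hΦ) _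

lemma smooth_uX : ContDiffOn ℝ ∞ (uX n φ) (univ ×ˢ I) :=
  (((contDiffOn_const.mul (hΦ.pow _)).mul (smooth_px hI hΦ)).mul (smooth_pt hI hΦ)).add
    ((hΦ.pow _).mul (smooth_pxt hI hΦ))

lemma smooth_uXx : ContDiffOn ℝ ∞ (uXx n φ) (univ ×ˢ I) :=
  contDiffOn_fderiv_apply hI (smooth_uX hI hΦ) _

lemma smooth_Qf : ContDiffOn ℝ ∞ (Qf n φ) (univ ×ˢ I) :=
  ((hΦ.pow _).mul (smooth_uX hI hΦ)).sub (hΦ.pow _)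

lemma smooth_Df : ContDiffOn ℝ ∞ (Df n φ) (univ ×ˢ I) :=
  (((hΦ.pow _).mul (smooth_px hI hΦ)).mul (smooth_uX hI hΦ)).add
    ((hΦ.sub contDiffOn_const).mul (smooth_pt hI hΦ))

/-! ### pointwise derivative facts -/

lemma hasDerivAt_phi_x (x : ℝ) {t : ℝ} (ht : t ∈ I) :
    HasDerivAt (fun y => φ y t) (px φ (x, t)) x := sliceX hI hΦ x ht

lemma hasDerivAt_phi_t (x : ℝ) {t : ℝ} (ht : t ∈ I) :
    HasDerivAt (fun s => φ x s) (pt φ (x, t)) t := sliceT hI hΦ x ht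

lemma hasDerivAt_pt_x (x : ℝ) {t : ℝ} (ht : t ∈ I) :
    HasDerivAt (fun y => pt φ (y, t)) (pxt φ (x, t)) x := sliceX hI (smooth_pt hI hΦ) x ht

lemma hasDerivAt_px_t (x : ℝ) {t : ℝ} (ht : t ∈ I) :
    HasDerivAt (fun s => px φ (x, s)) (pxt φ (x, t)) t := by
  have h := sliceT hI (smooth_px hI hΦ) x ht
  have e : fderiv ℝ (px φ) (x, t) (0, 1) = pxt φ (x, t) := by
    simp only [px, pt, pxt]
    exact clairaut hI hΦ (memU ht) (1, 0) (0, 1)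
  rwa [e] at h

lemma hasDerivAt_u_x (x : ℝ) {t : ℝ} (ht : t ∈ I) :
    HasDerivAt (fun y => φ y t ^ n * pt φ (y, t)) (uX n φ (x, t)) x := by
  exact ((hasDerivAt_phi_x hI hΦ x ht).pow n).mul (hasDerivAt_pt_x hI hΦ x ht)

lemma hasDerivAt_Q_x (x : ℝ) {t : ℝ} (ht : t ∈ I) :
    HasDerivAt (fun y => Qf n φ (y, t)) (QXd n φ (x, t)) x := by
  have hu : HasDerivAt (fun y => uX n φ (y, t)) (uXx n φ (x, t)) x :=
    sliceX hI (smooth_uX hI hΦ) x ht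
  exact (((hasDerivAt_phi_x hI hΦ x ht).pow n).mul hu).sub
    ((hasDerivAt_phi_x hI hΦ x ht).pow n)

lemma pde_key
    (hpde : ∀ x, ∀ t ∈ I,
      deriv (fun s => φ x s) t + deriv (fun y => φ y t ^ n) x
        - deriv (fun y => φ y t ^ n *
            deriv (fun z => φ z t ^ n * deriv (fun s => φ z s) t) y) x = 0)
    (x : ℝ) {t : ℝ} (ht : t ∈ I) : pt φ (x, t) = QXd n φ (x, t) := by
  have h1 : deriv (fun s => φ x s) t = pt φ (x, t) := (hasDerivAt_phi_t hI hΦ x ht).deriv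
  have h2 : deriv (fun y => φ y t ^ n) x = (n : ℝ) * Phi φ (x, t) ^ (n - 1) * px φ (x, t) :=
    ((hasDerivAt_phi_x hI hΦ x ht).pow n).deriv
  have eOuter : (fun y => φ y t ^ n *
      deriv (fun z => φ z t ^ n * deriv (fun s => φ z s) t) y)
      = fun y => φ y t ^ n * uX n φ (y, t) := by
    funext y
    have eInner : (fun z => φ z t ^ n * deriv (fun s => φ z s) t)
        = fun z => φ z t ^ n * pt φ (z, t) := by
      funext z
      rw [(hasDerivAt_phi_t hI hΦ z ht).deriv]
    rw [eInner, (hasDerivAt_u_x hI hΦ y ht).deriv]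
  have hOuter : HasDerivAt (fun y => φ y t ^ n * uX n φ (y, t))
      (((n : ℝ) * Phi φ (x, t) ^ (n - 1) * px φ (x, t)) * uX n φ (x, t)
        + Phi φ (x, t) ^ n * uXx n φ (x, t)) x :=
    ((hasDerivAt_phi_x hI hΦ x ht).pow n).mul (sliceX hI (smooth_uX hI hΦ) x ht)
  have h3 := hpde x t ht
  rw [h1, h2, eOuter, hOuter.deriv] at h3
  simp only [QXd]
  linarith

lemma hasDerivAt_G_x
    (hpde : ∀ x, ∀ t ∈ I,
      deriv (fun s => φ x s) t + deriv (fun y => φ y t ^ n) x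
        - deriv (fun y => φ y t ^ n *
            deriv (fun z => φ z t ^ n * deriv (fun s => φ z s) t) y) x = 0)
    (x : ℝ) {t : ℝ} (ht : t ∈ I) :
    HasDerivAt (fun y => Gf n φ (y, t)) (Df n φ (x, t)) x := by
  have hQ := hasDerivAt_Q_x (n := n) hI hΦ x ht
  have hφx := hasDerivAt_phi_x hI hΦ x ht
  have h : HasDerivAt (fun y => Gf n φ (y, t))
      ((px φ (x, t) * Qf n φ (x, t) + (φ x t - 1) * QXd n φ (x, t))
        + ((n : ℝ) + 1)⁻¹ * ((((n : ℕ) + 1 : ℕ) : ℝ) * φ x t ^ (n + 1 - 1) * px φ (x, t))) x :=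
    ((hφx.sub_const 1).mul hQ).add ((hφx.pow (n + 1)).const_mul (((n : ℝ) + 1)⁻¹))
  have hval : Df n φ (x, t)
      = (px φ (x, t) * Qf n φ (x, t) + (φ x t - 1) * QXd n φ (x, t))
        + ((n : ℝ) + 1)⁻¹ * ((((n : ℕ) + 1 : ℕ) : ℝ) * φ x t ^ (n + 1 - 1) * px φ (x, t)) := by
    rw [← pde_key hI hΦ hpde x ht]
    have hne : ((n : ℝ) + 1) ≠ 0 := by positivity
    simp only [Df, Qf, Phi, Nat.add_sub_cancel, Nat.cast_add, Nat.cast_one]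
    field_simp
    ring
  rw [hval]
  exact h

lemma hasDerivAt_F_t (hn : 2 ≤ n) (x : ℝ) {t : ℝ} (ht : t ∈ I) :
    HasDerivAt
      (fun s => (1/2) * φ x s ^ (2*n) * px φ (x, s) ^ 2 + (1/2) * (φ x s - 1) ^ 2)
      (Df n φ (x, t)) t := by
  have h1 := hasDerivAt_phi_t hI hΦ x ht
  have h2 := hasDerivAt_px_t hI hΦ x ht
  have h : HasDerivAt
      (fun s => (1/2) * φ x s ^ (2*n) * px φ (x, s) ^ 2 + (1/2) * (φ x s - 1) ^ 2)
      (((1/2 : ℝ) * ((((2*n : ℕ) : ℝ)) * φ x t ^ (2*n - 1) * pt φ (x, t))) * px φ (x, t) ^ 2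
        + ((1/2 : ℝ) * φ x t ^ (2*n)) * (((2 : ℕ) : ℝ) * px φ (x, t) ^ (2 - 1) * pxt φ (x, t))
        + (1/2 : ℝ) * (((2 : ℕ) : ℝ) * (φ x t - 1) ^ (2 - 1) * pt φ (x, t))) t :=
    (((h1.pow (2*n)).const_mul (1/2 : ℝ)).mul (h2.pow 2)).add
      (((h1.sub_const 1).pow 2).const_mul (1/2 : ℝ))
  have hval : Df n φ (x, t)
      = ((1/2 : ℝ) * ((((2*n : ℕ) : ℝ)) * φ x t ^ (2*n - 1) * pt φ (x, t))) * px φ (x, t) ^ 2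
        + ((1/2 : ℝ) * φ x t ^ (2*n)) * (((2 : ℕ) : ℝ) * px φ (x, t) ^ (2 - 1) * pxt φ (x, t))
        + (1/2 : ℝ) * (((2 : ℕ) : ℝ) * (φ x t - 1) ^ (2 - 1) * pt φ (x, t)) := by
    simp only [Df, uX, Phi]
    rw [show 2*n - 1 = n + (n - 1) from by omega, show 2*n = n + n from by omega]
    push_cast [show n - 1 + 1 = n from by omega]
    ring
  rw [hval]
  exact h

lemma px_zero {R : ℝ} (hsupp : ∀ x, ∀ t ∈ I, R ≤ |x| → φ x t = 1)
    {x t : ℝ} (ht : t ∈ I) (hx : R < |x|) : px φ (x, t) = 0 := by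
  have ho : IsOpen {y : ℝ | R < |y|} := isOpen_lt continuous_const continuous_abs
  have hev : (fun y => φ y t) =ᶠ[nhds x] fun _ => (1 : ℝ) := by
    filter_upwards [ho.eventually_mem hx] with y hy
    exact hsupp y t ht hy.le
  have h0 : HasDerivAt (fun y => φ y t) 0 x :=
    (hasDerivAt_const x (1 : ℝ)).congr_of_eventuallyEq hev
  exact (hasDerivAt_phi_x hI hΦ x ht).unique h0

end smooth

noncomputable def FF (n : ℕ) (φ : ℝ → ℝ → ℝ) : ℝ × ℝ → ℝ :=
  fun p => (1/2) * Phi φ p ^ (2*n) * px φ p ^ 2 + (1/2) * (Phi φ p - 1) ^ 2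

noncomputable def Ff (n : ℕ) (φ : ℝ → ℝ → ℝ) : ℝ → ℝ → ℝ := fun t x => FF n φ (x, t)

lemma smooth_FF (hI : IsOpen I) (hΦ : ContDiffOn ℝ ∞ (Phi φ) (univ ×ˢ I)) :
    ContDiffOn ℝ ∞ (FF n φ) (univ ×ˢ I) :=
  ((contDiffOn_const.mul (hΦ.pow _)).mul ((smooth_px hI hΦ).pow _)).add
    (contDiffOn_const.mul ((hΦ.sub contDiffOn_const).pow _))

end Stmt13Aux

open Stmt13Aux Set

/-- for a smooth solution of the magma equation with `m = -n`, bounded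
below by `α > 0` and identically `1` for `|x| ≥ R`, the generalized momentum
`N[φ(·,t)] = ∫ (1/2) φ^{2n} (∂_x φ)² + (1/2)(φ-1)² dx` is constant in `t` on `I`. -/
theorem stmt_13 (n : ℕ) (hn : 2 ≤ n) (I : Set ℝ) (hIopen : IsOpen I)
    (hIinterval : I.OrdConnected) (φ : ℝ → ℝ → ℝ)
    (hreg : ContDiffOn ℝ (⊤ : ℕ∞) (fun p : ℝ × ℝ => φ p.1 p.2) (Set.univ ×ˢ I))
    (α : ℝ) (hα : 0 < α) (hlow : ∀ x, ∀ t ∈ I, α ≤ φ x t)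
    (R : ℝ) (hR : 0 < R) (hsupp : ∀ x, ∀ t ∈ I, R ≤ |x| → φ x t = 1)
    (hpde : ∀ x, ∀ t ∈ I,
      deriv (fun s => φ x s) t + deriv (fun y => φ y t ^ n) x
        - deriv (fun y => φ y t ^ n *
            deriv (fun z => φ z t ^ n * deriv (fun s => φ z s) t) y) x = 0) :
    ∀ t₁ ∈ I, ∀ t₂ ∈ I,
      (∫ x : ℝ, ((1 / 2) * φ x t₁ ^ (2 * n) * (deriv (fun y => φ y t₁) x) ^ 2
          + (1 / 2) * (φ x t₁ - 1) ^ 2)) =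
        ∫ x : ℝ, ((1 / 2) * φ x t₂ ^ (2 * n) * (deriv (fun y => φ y t₂) x) ^ 2
          + (1 / 2) * (φ x t₂ - 1) ^ 2) := by
  have hΦ : ContDiffOn ℝ ∞ (Phi φ) (Set.univ ×ˢ I) := hreg.of_le (by simp)
  set B : ℝ := R + 1 with hBdef
  have hRB : R < B := by simp [hBdef]
  have hB0 : (0 : ℝ) < B := by linarith
  -- Step 1: the integral over ℝ equals the interval integral of `Ff`.
  have hInt_eq : ∀ t ∈ I,
      (∫ x : ℝ, ((1 / 2) * φ x t ^ (2 * n) * (deriv (fun y => φ y t) x) ^ 2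
          + (1 / 2) * (φ x t - 1) ^ 2)) = ∫ x in (-B)..B, Ff n φ t x := by
    intro t ht
    have h1 : ∀ x : ℝ, ((1 / 2) * φ x t ^ (2 * n) * (deriv (fun y => φ y t) x) ^ 2
        + (1 / 2) * (φ x t - 1) ^ 2) = Ff n φ t x := by
      intro x
      rw [(hasDerivAt_phi_x hIopen hΦ x ht).deriv]
      rfl
    have hsup : Function.support (Ff n φ t) ⊆ Set.Ioc (-B) B := by
      intro x hx
      have hxR : ¬ R < |x| := by
        intro hlt
        apply hx
        simp only [Ff, FF, Phi, px_zero hIopen hΦ hsupp ht hlt, hsupp x t ht hlt.le]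
        ring
      have := abs_le.mp (not_lt.mp hxR)
      exact ⟨by linarith [this.1], by linarith [this.2]⟩
    have e1 : (∫ x : ℝ, ((1 / 2) * φ x t ^ (2 * n) * (deriv (fun y => φ y t) x) ^ 2
        + (1 / 2) * (φ x t - 1) ^ 2)) = ∫ x : ℝ, Ff n φ t x := by
      congr 1
      funext x
      exact h1 x
    rw [e1, ← intervalIntegral.integral_eq_integral_of_support_subset hsup]
  -- Step 2: the interval integral has zero derivative on `I`.
  have hg' : ∀ t₀ ∈ I, HasDerivAt (fun t => ∫ x in (-B)..B, Ff n φ t x) 0 t₀ := by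
    intro t₀ ht₀
    obtain ⟨ε', hε', hball⟩ := Metric.isOpen_iff.mp hIopen t₀ ht₀
    set ε : ℝ := ε' / 2 with hεdef
    have hεpos : 0 < ε := by positivity
    have hcb : Metric.closedBall t₀ ε ⊆ I :=
      (Metric.closedBall_subset_ball (by simp [hεdef]; linarith)).trans hball
    have hIcc : Set.Icc (t₀ - ε) (t₀ + ε) ⊆ I := by
      rw [← Real.closedBall_eq_Icc]; exact hcb
    have hK : IsCompact (Set.Icc (-B) B ×ˢ Set.Icc (t₀ - ε) (t₀ + ε)) :=
      isCompact_Icc.prod isCompact_Icc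
    have hKU : (Set.Icc (-B) B ×ˢ Set.Icc (t₀ - ε) (t₀ + ε)) ⊆ Set.univ ×ˢ I :=
      Set.prod_mono (Set.subset_univ _) hIcc
    obtain ⟨C, hC⟩ := hK.exists_bound_of_continuousOn
      (((smooth_Df hIopen hΦ).continuousOn).mono hKU)
    have key := intervalIntegral.hasDerivAt_integral_of_dominated_loc_of_deriv_le
      (F := Ff n φ) (F' := fun t x => Df n φ (x, t)) (bound := fun _ => C)
      (a := -B) (b := B) (μ := MeasureTheory.volume) (x₀ := t₀) (s := Metric.ball t₀ ε) (Metric.ball_mem_nhds t₀ hεpos)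
      (by
        filter_upwards [hIopen.eventually_mem ht₀] with t ht
        exact ((sliceCont hIopen (smooth_FF hIopen hΦ).continuousOn ht).aestronglyMeasurable).restrict)
      ((sliceCont hIopen (smooth_FF hIopen hΦ).continuousOn ht₀).intervalIntegrable _ _)
      (((sliceCont hIopen (smooth_Df hIopen hΦ).continuousOn ht₀).aestronglyMeasurable).restrict)
      (Filter.Eventually.of_forall (fun x hx t htb => by
        apply hC
        refine ⟨?_, ?_⟩
        · have hxI : x ∈ Set.Ioc (-B) B := by
            rwa [Set.uIoc_of_le (by linarith : (-B : ℝ) ≤ B)] at hx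
          exact Set.Ioc_subset_Icc_self hxI
        · have := Metric.ball_subset_closedBall htb
          rwa [Real.closedBall_eq_Icc] at this))
      intervalIntegrable_const
      (Filter.Eventually.of_forall (fun x hx t htb => by
        have htI : t ∈ I := hcb (Metric.ball_subset_closedBall htb)
        exact hasDerivAt_F_t hIopen hΦ hn x htI))
    have hftc : (∫ x in (-B)..B, Df n φ (x, t₀)) = Gf n φ (B, t₀) - Gf n φ (-B, t₀) :=
      intervalIntegral.integral_eq_sub_of_hasDerivAt
        (fun x _ => hasDerivAt_G_x hIopen hΦ hpde x ht₀)
        key.1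
    have hGB : Gf n φ (B, t₀) = ((n : ℝ) + 1)⁻¹ := by
      have h1 : φ B t₀ = 1 := hsupp B t₀ ht₀ (by rw [abs_of_pos hB0]; linarith)
      simp [Gf, Phi, h1]
    have hGB' : Gf n φ (-B, t₀) = ((n : ℝ) + 1)⁻¹ := by
      have h1 : φ (-B) t₀ = 1 := hsupp (-B) t₀ ht₀ (by rw [abs_neg, abs_of_pos hB0]; linarith)
      simp [Gf, Phi, h1]
    have : (∫ x in (-B)..B, Df n φ (x, t₀)) = 0 := by rw [hftc, hGB, hGB']; ring
    rw [← this]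
    exact key.2
  -- Step 3: constancy.
  intro t₁ ht₁ t₂ ht₂
  rw [hInt_eq t₁ ht₁, hInt_eq t₂ ht₂]
  set g : ℝ → ℝ := fun t => ∫ x in (-B)..B, Ff n φ t x with hgdef
  have hsub : Set.uIcc t₁ t₂ ⊆ I := hIinterval.uIcc_subset ht₁ ht₂
  have hbound := Convex.norm_image_sub_le_of_norm_hasDerivWithin_le
    (f := g) (f' := fun _ => (0 : ℝ)) (C := 0) (s := Set.uIcc t₁ t₂)
    (fun t ht => (hg' t (hsub ht)).hasDerivWithinAt)
    (fun t _ => by simp) (convex_uIcc t₁ t₂) left_mem_uIcc right_mem_uIcc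
  rw [zero_mul] at hbound
  have := norm_le_zero_iff.mp hbound
  have := sub_eq_zero.mp this
  linarith [this]
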